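/- arXiv:1611.08817 — 6 statements merged into one kernel-verified Lean document; each statement's English description precedes it below -/
import Mathlib

section
/- Let ρ : [0,∞) → ℝ be convex and nondecreasing with ρ(0) = 0 and 0 a strict minimizer (ρ(s) > 0 for s > 0). Let R(u) = Σᵢ ρ(|(∇ₓu)ᵢ|) where ∇ₓ is a first-order difference operator on ℝᴺ, and let E(u) = R(u) + (α/2)‖Au − f‖² with A a linear map, α > 0. If ũ minimizes E with noiseless data f = Aũ, then ũ is a constant vector. -/
open Fin.NatCast Filter Topology

/-!
Contracting `ũ` towards the constant vector `ũ 0` by a factor `1 - ε` scales every difference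
by `1 - ε`, so convexity of `ρ` with `ρ 0 = 0` lowers the regularizer to at most
`(1 - ε) R(ũ)`, while the fidelity term, which vanishes at `ũ`, grows only like `ε²`.
Minimality then gives `ε R(ũ) ≤ C ε²` for all small `ε > 0`, hence `R(ũ) = 0`, and since `0` is
the strict minimizer of `ρ` all differences of `ũ` vanish.
-/

theorem ConvexOn.map_smul_le_smul_of_map_zero {E : Type*} [AddCommGroup E] [Module ℝ E]
    {s : Set E} {ρ : E → ℝ} (hρ : ConvexOn ℝ s ρ) (h0 : (0 : E) ∈ s) (hρ0 : ρ 0 = 0)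
    {x : E} (hx : x ∈ s) {t : ℝ} (ht0 : 0 ≤ t) (ht1 : t ≤ 1) :
    ρ (t • x) ≤ t * ρ x := by
  simpa [hρ0] using hρ.2 hx h0 ht0 (sub_nonneg.2 ht1) (add_sub_cancel t 1)

theorem nonpos_of_forall_le_one_sub_mul_add_mul_sq {S C : ℝ}
    (h : ∀ ε : ℝ, 0 < ε → ε ≤ 1 → S ≤ (1 - ε) * S + C * ε ^ 2) : S ≤ 0 := by
  have hlin : ∀ᶠ ε in 𝓝[>] (0 : ℝ), S ≤ C * ε := by
    filter_upwards [Ioc_mem_nhdsGT one_pos] with ε ⟨hε0, hε1⟩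
    nlinarith [h ε hε0 hε1]
  have hlim : Tendsto (fun ε : ℝ => C * ε) (𝓝[>] 0) (𝓝 0) := by
    simpa using ((continuous_const_mul C).tendsto 0).mono_left nhdsWithin_le_nhds
  exact ge_of_tendsto hlim hlin

theorem apply_abs_nonneg {ρ : ℝ → ℝ} (hρ0 : ρ 0 = 0) (hpos : ∀ s > (0 : ℝ), 0 < ρ s) (s : ℝ) :
    0 ≤ ρ |s| := by
  rcases (abs_nonneg s).eq_or_lt with h | h
  · rw [← h, hρ0]
  · exact (hpos _ h).le

section GradientPenalty

variable {N : ℕ} [NeZero N]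

/-- The paper's `R` with Neumann boundary: no difference wraps around from `N - 1` to `0`. -/
def gradientPenalty (ρ : ℝ → ℝ) (u : Fin N → ℝ) : ℝ :=
  ∑ i ∈ Finset.range (N - 1), ρ |u ((i + 1 : ℕ) : Fin N) - u ((i : ℕ) : Fin N)|

variable {ρ : ℝ → ℝ}

theorem gradientPenalty_nonneg (hρ0 : ρ 0 = 0) (hpos : ∀ s > (0 : ℝ), 0 < ρ s)
    (u : Fin N → ℝ) : 0 ≤ gradientPenalty ρ u :=
  Finset.sum_nonneg fun _ _ => apply_abs_nonneg hρ0 hpos _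

theorem gradientPenalty_mul_add_const_le (hconv : ConvexOn ℝ (Set.Ici 0) ρ) (hρ0 : ρ 0 = 0)
    (u : Fin N → ℝ) {t : ℝ} (ht0 : 0 ≤ t) (ht1 : t ≤ 1) (c : ℝ) :
    gradientPenalty ρ (fun i => t * u i + c) ≤ t * gradientPenalty ρ u := by
  rw [gradientPenalty, gradientPenalty, Finset.mul_sum]
  refine Finset.sum_le_sum fun i _ => ?_
  rw [add_sub_add_right_eq_sub, ← mul_sub, abs_mul, abs_of_nonneg ht0]
  exact hconv.map_smul_le_smul_of_map_zero Set.self_mem_Ici hρ0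
    (Set.mem_Ici.2 (abs_nonneg _)) ht0 ht1

theorem eq_of_gradientPenalty_eq_zero (hρ0 : ρ 0 = 0) (hpos : ∀ s > (0 : ℝ), 0 < ρ s)
    {u : Fin N → ℝ} (hR : gradientPenalty ρ u = 0) (i : Fin N) : u i = u 0 := by
  have hstep : ∀ k < N - 1, u ((k + 1 : ℕ) : Fin N) = u ((k : ℕ) : Fin N) := fun k hk => by
    by_contra hne
    have hzero := (Finset.sum_eq_zero_iff_of_nonneg fun _ _ => apply_abs_nonneg hρ0 hpos _).1 hR k
      (Finset.mem_range.2 hk)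
    exact (hpos _ (abs_pos.2 (sub_ne_zero.2 hne))).ne' hzero
  have hchain : ∀ k < N, u ((k : ℕ) : Fin N) = u 0 := by
    intro k
    induction k with
    | zero => simp
    | succ k ih => exact fun hk => (hstep k (by omega)).trans (ih (by omega))
  simpa using hchain i i.isLt

end GradientPenalty
open Fin.NatCast

theorem convex_noiseless_recovery_constant_general (N K : ℕ) [NeZero N] (ρ : ℝ → ℝ)
    (hconv : ConvexOn ℝ (Set.Ici 0) ρ)
    (hρ0 : ρ 0 = 0) (hpos : ∀ s > (0 : ℝ), 0 < ρ s)
    (α : ℝ)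
    (A : (Fin N → ℝ) →ₗ[ℝ] EuclideanSpace ℝ (Fin K))
    (f : EuclideanSpace ℝ (Fin K))
    (ub : Fin N → ℝ) (hf : f = A ub)
    (E : (Fin N → ℝ) → ℝ)
    (hE : ∀ u, E u =
      (∑ i ∈ Finset.range (N - 1), ρ |u ((i + 1 : ℕ) : Fin N) - u ((i : ℕ) : Fin N)|)
        + α / 2 * ‖A u - f‖ ^ 2)
    (hmin : ∀ u, E ub ≤ E u) :
    ∃ c : ℝ, ∀ i, ub i = c := by
  subst hf
  set R := gradientPenalty ρ ub
  set w : Fin N → ℝ := fun _ => ub 0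
  have hcompete : ∀ ε : ℝ, 0 < ε → ε ≤ 1 →
      R ≤ (1 - ε) * R + α / 2 * ‖A w - A ub‖ ^ 2 * ε ^ 2 := by
    intro ε hε0 hε1
    set v : Fin N → ℝ := fun i => (1 - ε) * ub i + ε * ub 0
    have hAv : A v - A ub = ε • (A w - A ub) := by
      rw [← map_sub, ← map_sub, ← map_smul]
      congr 1
      funext i
      simp only [v, w, Pi.sub_apply, Pi.smul_apply, smul_eq_mul]
      ring
    have hRv : gradientPenalty ρ v ≤ (1 - ε) * R :=
      gradientPenalty_mul_add_const_le hconv hρ0 ub (by linarith) (by linarith) _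
    calc R = E ub := by simp [hE, R, gradientPenalty]
      _ ≤ E v := hmin v
      _ = gradientPenalty ρ v + α / 2 * ‖A w - A ub‖ ^ 2 * ε ^ 2 := by
        rw [hE, hAv, norm_smul, Real.norm_of_nonneg hε0.le]
        simp only [gradientPenalty]
        ring
      _ ≤ _ := by linarith
  have hR : R = 0 := le_antisymm (nonpos_of_forall_le_one_sub_mul_add_mul_sq hcompete)
    (gradientPenalty_nonneg hρ0 hpos ub)
  exact ⟨ub 0, eq_of_gradientPenalty_eq_zero hρ0 hpos hR⟩

theorem convex_noiseless_recovery_constant (N K : ℕ) [NeZero N] (ρ : ℝ → ℝ)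
    (hconv : ConvexOn ℝ (Set.Ici 0) ρ)
    (hmono : MonotoneOn ρ (Set.Ici 0))
    (hρ0 : ρ 0 = 0) (hpos : ∀ s > (0 : ℝ), 0 < ρ s)
    (α : ℝ) (hα : 0 < α)
    (A : (Fin N → ℝ) →ₗ[ℝ] EuclideanSpace ℝ (Fin K))
    (f : EuclideanSpace ℝ (Fin K))
    (ub : Fin N → ℝ) (hf : f = A ub)
    (E : (Fin N → ℝ) → ℝ)
    (hE : ∀ u, E u =
      (∑ i ∈ Finset.range (N - 1), ρ |u ((i + 1 : ℕ) : Fin N) - u ((i : ℕ) : Fin N)|)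
        + α / 2 * ‖A u - f‖ ^ 2)
    (hmin : ∀ u, E ub ≤ E u) :
    ∃ c : ℝ, ∀ i, ub i = c :=
  convex_noiseless_recovery_constant_general N K ρ hconv hρ0 hpos α A f ub hf E hE hmin
end

section
/- Let ρ : [0,∞) → ℝ be nondecreasing with ρ(0) = 0, ρ(s) > 0 for s > 0, and suppose the left derivative ρ'(Ū⁻) exists and is strictly positive for a fixed Ū > 0. Let N = 3M and define the gate signal u̲ ∈ ℝᴺ by u̲ᵢ = Ū for M+1 ≤ i ≤ 2M and u̲ᵢ = 0 otherwise, and let f = Au̲. Define E(u) = Σᵢ ρ(|u_{i+1} − uᵢ|) + (α/2)‖Au − f‖² with α > 0 and A linear. Then there exists u with strictly lower edge contrast than u̲ (namely uᵉ with uᵉᵢ = ε off the middle block and Ū − ε on it, for some small ε > 0) such that E(u) < E(u̲). -/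
/-!
Lowering the gate by `ε` on the middle block and raising it by `ε` elsewhere shrinks both jumps
from `Ū` to `Ū - 2ε`, so the regulariser drops by `2(ρ(Ū) - ρ(Ū - 2ε)) ≈ 4 ρ'(Ū⁻) ε`, while the
fidelity term, which vanishes at the gate signal, grows only like `ε²`. For small `ε` the linear
gain beats the quadratic loss.
-/

open Fin.NatCast

open Filter Set Topology

def blockSignal (p q : ℕ) (a b : ℝ) (i : ℕ) : ℝ := if p ≤ i ∧ i < q then a else b

lemma sum_range_jumps_eq_of_blockSignal {n p q : ℕ} [NeZero n] (hp : 0 < p) (hpq : p < q)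
    (hqn : q < n) {ρ : ℝ → ℝ} (hρ0 : ρ 0 = 0) {a b : ℝ} {u : Fin n → ℝ}
    (hu : ∀ i : Fin n, u i = blockSignal p q a b i) :
    ∑ i ∈ Finset.range (n - 1), ρ |u ((i + 1 : ℕ) : Fin n) - u ((i : ℕ) : Fin n)| =
      ρ |a - b| + ρ |b - a| := by
  have hcast : ∀ i ∈ Finset.range (n - 1),
      ρ |u ((i + 1 : ℕ) : Fin n) - u ((i : ℕ) : Fin n)| =
        ρ |blockSignal p q a b (i + 1) - blockSignal p q a b i| := by
    intro i hi
    rw [Finset.mem_range] at hi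
    rw [hu, hu, Fin.val_cast_of_lt (by omega), Fin.val_cast_of_lt (by omega)]
  rw [Finset.sum_congr rfl hcast, Finset.sum_eq_add (p - 1) (q - 1) (by omega)]
  · simp only [blockSignal]
    rw [if_pos (by omega), if_neg (by omega), if_neg (by omega), if_pos (by omega)]
  · intro i _ hi
    simp only [blockSignal]
    split_ifs <;> first | omega | rw [sub_self, abs_zero, hρ0]
  · intro h; exact absurd (Finset.mem_range.2 (by omega)) h
  · intro h; exact absurd (Finset.mem_range.2 (by omega)) h

lemma eventually_add_sq_lt_of_hasDerivWithinAt_Iic {ρ : ℝ → ℝ} {U d c : ℝ}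
    (hρ : HasDerivWithinAt ρ d (Iic U) U) (hd : 0 < d) (hc : 0 < c) (C : ℝ) :
    ∀ᶠ ε in 𝓝[>] 0, ρ (U - c * ε) + C * ε ^ 2 < ρ U := by
  have hline : HasDerivWithinAt (fun ε : ℝ => U - c * ε) (-c) (Ici 0) 0 := by
    simpa using (((hasDerivAt_id (0 : ℝ)).const_mul c).const_sub U).hasDerivWithinAt
  have hmaps : MapsTo (fun ε : ℝ => U - c * ε) (Ici 0) (Iic U) := fun ε (hε : 0 ≤ ε) => by
    simp only [mem_Iic]; nlinarith
  have hρ' : HasDerivWithinAt ρ d (Iic U) (U - c * 0) := by simpa using hρ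
  have hg := (hρ'.comp 0 hline hmaps).add
    ((hasDerivAt_pow 2 (0 : ℝ)).hasDerivWithinAt.const_mul C)
  have hg_neg : d * -c + C * (2 * 0 ^ (2 - 1)) < 0 := by simpa using mul_pos hd hc
  filter_upwards [hg.Ioi_of_Ici.limsup_slope_le' (lt_irrefl (0 : ℝ)) hg_neg, self_mem_nhdsWithin] with ε hslope (hε : 0 < ε)
  rw [slope_def_field, div_neg_iff] at hslope
  rcases hslope with ⟨-, h⟩ | ⟨h, -⟩
  · linarith
  · simpa using h

theorem exists_lower_contrast_with_smaller_energy_general (M K : ℕ) [NeZero (3 * M)]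
    (ρ : ℝ → ℝ) (U α : ℝ) (hU : 0 < U)
    (hρ0 : ρ 0 = 0)
    (dL : ℝ) (hdL : 0 < dL)
    (hleft : HasDerivWithinAt ρ dL (Set.Iic U) U)
    (A : (Fin (3 * M) → ℝ) →ₗ[ℝ] EuclideanSpace ℝ (Fin K))
    (ub : Fin (3 * M) → ℝ)
    (hub : ub = fun i : Fin (3 * M) => if M ≤ (i : ℕ) ∧ (i : ℕ) < 2 * M then U else 0)
    (f : EuclideanSpace ℝ (Fin K)) (hf : f = A ub)
    (E : (Fin (3 * M) → ℝ) → ℝ)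
    (hE : ∀ u, E u =
      (∑ i ∈ Finset.range (3 * M - 1),
        ρ |u ((i + 1 : ℕ) : Fin (3 * M)) - u ((i : ℕ) : Fin (3 * M))|)
        + α / 2 * ‖A u - f‖ ^ 2) :
    ∃ ε > (0 : ℝ),
      E (fun i : Fin (3 * M) => if M ≤ (i : ℕ) ∧ (i : ℕ) < 2 * M then U - ε else ε) < E ub := by
  have hM : 0 < M := Nat.pos_of_ne_zero fun h => NeZero.ne (3 * M) (by simp [h])
  set d : Fin (3 * M) → ℝ := fun i => blockSignal M (2 * M) (-1) 1 i
  obtain ⟨ε, hε, hgain, hεU⟩ := (eventually_mem_nhdsWithin.and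
    ((eventually_add_sq_lt_of_hasDerivWithinAt_Iic hleft hdL two_pos (α / 4 * ‖A d‖ ^ 2)).and
      (eventually_nhdsWithin_of_eventually_nhds (eventually_lt_nhds (half_pos hU))))).exists
  refine ⟨ε, hε, ?_⟩
  set uε := fun i : Fin (3 * M) => if M ≤ (i : ℕ) ∧ (i : ℕ) < 2 * M then U - ε else ε
  have hgap : uε - ub = ε • d := by
    funext i; subst hub; simp only [uε, d, blockSignal, Pi.sub_apply, Pi.smul_apply, smul_eq_mul]
    split_ifs <;> ring
  have hEub : E ub = ρ U + ρ U := by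
    rw [hE, sum_range_jumps_eq_of_blockSignal (q := 2 * M) hM (by omega) (by omega) hρ0
      (congrFun hub)]
    simp [hf, abs_of_pos hU]
  have hEε : E uε = ρ (U - 2 * ε) + ρ (U - 2 * ε) + α / 2 * (ε ^ 2 * ‖A d‖ ^ 2) := by
    rw [hE, sum_range_jumps_eq_of_blockSignal (q := 2 * M) hM (by omega) (by omega) hρ0
      (u := uε) (fun _ => rfl), hf, ← map_sub, hgap, map_smul, norm_smul, mul_pow,
      Real.norm_eq_abs, sq_abs, abs_sub_comm ε, abs_of_pos (by linarith : 0 < U - ε - ε),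
      show U - ε - ε = U - 2 * ε by ring]
  rw [hEε, hEub]
  linarith

theorem exists_lower_contrast_with_smaller_energy (M K : ℕ) (hM : 0 < M) [NeZero (3 * M)]
    (ρ : ℝ → ℝ) (U α : ℝ) (hU : 0 < U) (hα : 0 < α)
    (hρ0 : ρ 0 = 0)
    (hmono : MonotoneOn ρ (Set.Ici 0))
    (hpos : ∀ s > (0 : ℝ), 0 < ρ s)
    (dL : ℝ) (hdL : 0 < dL)
    (hleft : HasDerivWithinAt ρ dL (Set.Iic U) U)
    (A : (Fin (3 * M) → ℝ) →ₗ[ℝ] EuclideanSpace ℝ (Fin K))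
    (ub : Fin (3 * M) → ℝ)
    (hub : ub = fun i : Fin (3 * M) => if M ≤ (i : ℕ) ∧ (i : ℕ) < 2 * M then U else 0)
    (f : EuclideanSpace ℝ (Fin K)) (hf : f = A ub)
    (E : (Fin (3 * M) → ℝ) → ℝ)
    (hE : ∀ u, E u =
      (∑ i ∈ Finset.range (3 * M - 1),
        ρ |u ((i + 1 : ℕ) : Fin (3 * M)) - u ((i : ℕ) : Fin (3 * M))|)
        + α / 2 * ‖A u - f‖ ^ 2) :
    ∃ ε > (0 : ℝ),
      E (fun i : Fin (3 * M) => if M ≤ (i : ℕ) ∧ (i : ℕ) < 2 * M then U - ε else ε) < E ub :=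
  exists_lower_contrast_with_smaller_energy_general M K ρ U α hU hρ0 dL hdL hleft A ub hub f hf E hE
end

section
/- Under the setup of the gate signal u̲ with noiseless data f = Au̲: if ρ is nondecreasing with ρ(0)=0 and the right derivative ρ'(Ū⁺) > 0 exists, then any u whose two jump magnitudes satisfy |u_{M+1}−u_M| ≥ Ū and |u_{2M+1}−u_{2M}| ≥ Ū with at least one strict inequality has E(u) > E(u̲). -/
/-!
The gate `u̲` has exactly two jumps, both of height `Ū`, and fits the data exactly, so
`E u̲ = 2 ρ(Ū)`. Every other term of `E u` is nonnegative, so `E u` is at least `ρ` of the two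
jumps of `u` at the same positions. As `ρ` is nondecreasing each is at least `ρ(Ū)`, and a positive
right derivative at `Ū` forces `ρ(Ū) < ρ(a)` for every `a > Ū`, which makes one of them larger.
-/

open Filter Topology Finset

theorem MonotoneOn.lt_of_hasDerivWithinAt_Ici_of_pos {ρ : ℝ → ℝ} {x a d : ℝ}
    (hmono : MonotoneOn ρ (Set.Ici x)) (hd : HasDerivWithinAt ρ d (Set.Ici x) x) (hd_pos : 0 < d)
    (hxa : x < a) : ρ x < ρ a := by
  have hslope : Tendsto (slope ρ x) (𝓝[>] x) (𝓝 d) :=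
    (hasDerivWithinAt_iff_tendsto_slope' Set.self_notMem_Ioi).mp hd.Ioi_of_Ici
  obtain ⟨y, hy_slope, hya, hy_mem⟩ := ((hslope.eventually (Ioi_mem_nhds hd_pos)).and
    ((eventually_nhdsWithin_of_eventually_nhds (eventually_lt_nhds hxa)).and
      self_mem_nhdsWithin)).exists
  have hxy : x < y := hy_mem
  calc ρ x < ρ y := (slope_pos_iff_of_le hxy.le).mp hy_slope
    _ ≤ ρ a := hmono (Set.mem_Ici.mpr hxy.le) (Set.mem_Ici.mpr (hxy.trans hya).le) hya.le

noncomputable def jumpPenalty (ρ : ℝ → ℝ) (n : ℕ) (v : ℕ → ℝ) : ℝ :=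
  ∑ i ∈ range (n - 1), ρ |v (i + 1) - v i|

theorem jumpPenalty_congr {ρ : ℝ → ℝ} {n : ℕ} {v w : ℕ → ℝ} (h : ∀ j < n, v j = w j) :
    jumpPenalty ρ n v = jumpPenalty ρ n w := by
  refine Finset.sum_congr rfl fun i hi ↦ ?_
  have hi : i < n - 1 := mem_range.mp hi
  rw [h i (by omega), h (i + 1) (by omega)]

theorem add_le_jumpPenalty {ρ : ℝ → ℝ} (hρ : ∀ x, 0 ≤ x → 0 ≤ ρ x) {n a b : ℕ} (hab : a ≠ b)
    (ha : a < n - 1) (hb : b < n - 1) (v : ℕ → ℝ) :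
    ρ |v (a + 1) - v a| + ρ |v (b + 1) - v b| ≤ jumpPenalty ρ n v := by
  rw [← Finset.sum_pair hab (f := fun i ↦ ρ |v (i + 1) - v i|)]
  refine sum_le_sum_of_subset_of_nonneg ?_ fun i _ _ ↦ hρ _ (abs_nonneg _)
  simp [insert_subset_iff, ha, hb]

def gate (M : ℕ) (U : ℝ) (j : ℕ) : ℝ :=
  if M ≤ j ∧ j < 2 * M then U else 0

theorem jumpPenalty_gate {ρ : ℝ → ℝ} (hρ0 : ρ 0 = 0) {M : ℕ} (hM : 0 < M) (U : ℝ) :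
    jumpPenalty ρ (3 * M) (gate M U) = ρ |U| + ρ |U| := by
  have hne : M - 1 ≠ 2 * M - 1 := by omega
  have hsub : {M - 1, 2 * M - 1} ⊆ range (3 * M - 1) := by
    simp only [insert_subset_iff, singleton_subset_iff, mem_range]
    omega
  have hflat : ∀ i ∉ ({M - 1, 2 * M - 1} : Finset ℕ), gate M U (i + 1) = gate M U i := by
    intro i hi
    simp only [mem_insert, mem_singleton, not_or] at hi
    unfold gate
    split_ifs <;> first | rfl | omega
  rw [jumpPenalty, ← sum_subset hsub fun i _ hi ↦ by rw [hflat i hi, sub_self, abs_zero, hρ0],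
    sum_pair hne, Nat.sub_add_cancel hM, show 2 * M - 1 + 1 = 2 * M by omega]
  simp only [gate]
  rw [if_pos (by omega), if_neg (by omega), if_neg (by omega), if_pos (by omega)]
  simp [abs_neg]

open Fin.NatCast in
theorem higher_contrast_has_larger_energy (M K : ℕ) (hM : 0 < M) [NeZero (3 * M)]
    (ρ : ℝ → ℝ) (U α : ℝ) (hU : 0 < U) (hα : 0 < α)
    (hρ0 : ρ 0 = 0)
    (hmono : MonotoneOn ρ (Set.Ici 0))
    (dR : ℝ) (hdR : 0 < dR)
    (hright : HasDerivWithinAt ρ dR (Set.Ici U) U)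
    (A : (Fin (3 * M) → ℝ) →ₗ[ℝ] EuclideanSpace ℝ (Fin K))
    (ub : Fin (3 * M) → ℝ)
    (hub : ub = fun i : Fin (3 * M) => if M ≤ (i : ℕ) ∧ (i : ℕ) < 2 * M then U else 0)
    (f : EuclideanSpace ℝ (Fin K)) (hf : f = A ub)
    (E : (Fin (3 * M) → ℝ) → ℝ)
    (hE : ∀ u, E u =
      (∑ i ∈ Finset.range (3 * M - 1),
        ρ |u ((i + 1 : ℕ) : Fin (3 * M)) - u ((i : ℕ) : Fin (3 * M))|)
        + α / 2 * ‖A u - f‖ ^ 2) :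
    ∀ u : Fin (3 * M) → ℝ,
      U ≤ |u ((M : ℕ) : Fin (3 * M)) - u ((M - 1 : ℕ) : Fin (3 * M))| →
      U ≤ |u ((2 * M : ℕ) : Fin (3 * M)) - u ((2 * M - 1 : ℕ) : Fin (3 * M))| →
      (U < |u ((M : ℕ) : Fin (3 * M)) - u ((M - 1 : ℕ) : Fin (3 * M))| ∨
       U < |u ((2 * M : ℕ) : Fin (3 * M)) - u ((2 * M - 1 : ℕ) : Fin (3 * M))|) →
      E ub < E u := by
  intro u h₁ h₂ hstrict
  have hρ_nonneg : ∀ x, 0 ≤ x → 0 ≤ ρ x := fun x hx ↦ hρ0 ▸ hmono Set.self_mem_Ici hx hx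
  have hmonoU : MonotoneOn ρ (Set.Ici U) := hmono.mono (Set.Ici_subset_Ici.mpr hU.le)
  have hEub : E ub = ρ U + ρ U := by
    have hub_gate : ∀ j < 3 * M, ub (j : Fin (3 * M)) = gate M U j := fun j hj ↦ by
      simp [hub, gate, Fin.val_natCast, Nat.mod_eq_of_lt hj]
    have hpenalty := (jumpPenalty_congr hub_gate).trans (jumpPenalty_gate hρ0 hM U)
    rw [abs_of_pos hU] at hpenalty
    rw [hE, hf, sub_self, norm_zero, zero_pow two_ne_zero, mul_zero, add_zero]
    exact hpenalty
  have hEu := add_le_jumpPenalty hρ_nonneg (show M - 1 ≠ 2 * M - 1 by omega)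
    (by omega) (by omega) (fun j : ℕ ↦ u j) (n := 3 * M)
  rw [Nat.sub_add_cancel hM, show 2 * M - 1 + 1 = 2 * M by omega] at hEu
  have hjumps : ρ U + ρ U <
      ρ |u (M : ℕ) - u (M - 1 : ℕ)| + ρ |u (2 * M : ℕ) - u (2 * M - 1 : ℕ)| := by
    have hle : ∀ {a}, U ≤ a → ρ U ≤ ρ a := fun h ↦ hmonoU Set.self_mem_Ici h h
    rcases hstrict with h | h
    · exact add_lt_add_of_lt_of_le
        (hmonoU.lt_of_hasDerivWithinAt_Ici_of_pos hright hdR h) (hle h₂)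
    · exact add_lt_add_of_le_of_lt (hle h₁)
        (hmonoU.lt_of_hasDerivWithinAt_Ici_of_pos hright hdR h)
  have hdata : 0 ≤ α / 2 * ‖A u - f‖ ^ 2 := by positivity
  rw [hEub, hE]
  exact hjumps.trans_le (le_add_of_le_of_nonneg hEu hdata)
end

section
/- Let T(s) = ρ(min(s,τ)) be a truncated regularizer with ρ nondecreasing, ρ(0)=0, ρ(s)>0 for s>0, and τ > 0. Let Ω be a nonempty proper subset of {1,…,N}, 1_Ω its indicator vector, ζ > 0, J₁ = {i : (∇ₓ1_Ω)ᵢ ≠ 0}, and E^ζ(u) = Σᵢ T(|(∇ₓu)ᵢ|) + (α/2)‖A(u − ζ1_Ω)‖². If A^T A has minimal eigenvalue μ_min > 0 and ζ > τ + sqrt(4T(τ)·#J₁/(α·μ_min)), then ζ1_Ω is the unique global minimizer of E^ζ. -/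
/-!
At `ζ 1_Ω` the data term vanishes and every jump of `ζ 1_Ω` exceeds `τ`, so the energy is
`#J₁ ρ(τ)`. For `u ≠ ζ 1_Ω` either the data term alone already exceeds `#J₁ ρ(τ)`, or it is at
most that, in which case `‖u - ζ 1_Ω‖²` is so small (by `μ_min`) that every jump of `ζ 1_Ω`
survives in `u` with size above `τ`; the regularizer of `u` is then at least `#J₁ ρ(τ)` and the
data term is strictly positive.
-/

open scoped Classical
open Fin.NatCast
open Finset

lemma nonneg_of_monotoneOn_Ici {ρ : ℝ → ℝ} (hρ0 : ρ 0 = 0) (hmono : MonotoneOn ρ (Set.Ici 0))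
    {s : ℝ} (hs : 0 ≤ s) : 0 ≤ ρ s :=
  hρ0 ▸ hmono (Set.mem_Ici.2 le_rfl) hs hs

section TruncatedSum

variable {κ : Type*} {ρ : ℝ → ℝ} {τ : ℝ} {I : Finset κ} {f : κ → ℝ} {p : κ → Prop}
  [DecidablePred p]

lemma sum_min_eq_card_filter_mul (hρ0 : ρ 0 = 0) (hτ : 0 ≤ τ)
    (hp : ∀ k ∈ I, p k → τ ≤ f k) (hnp : ∀ k ∈ I, ¬p k → f k = 0) :
    ∑ k ∈ I, ρ (min (f k) τ) = #(I.filter p) * ρ τ := by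
  rw [← nsmul_eq_mul, ← sum_const, sum_filter]
  refine sum_congr rfl fun k hk => ?_
  by_cases hpk : p k
  · rw [if_pos hpk, min_eq_right (hp k hk hpk)]
  · rw [if_neg hpk, hnp k hk hpk, min_eq_left hτ, hρ0]

lemma card_filter_mul_le_sum_min (hρ0 : ρ 0 = 0) (hmono : MonotoneOn ρ (Set.Ici 0))
    (hτ : 0 ≤ τ) (hf : ∀ k ∈ I, 0 ≤ f k) (hp : ∀ k ∈ I, p k → τ ≤ f k) :
    #(I.filter p) * ρ τ ≤ ∑ k ∈ I, ρ (min (f k) τ) := by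
  rw [← nsmul_eq_mul, ← sum_const]
  calc ∑ _k ∈ I.filter p, ρ τ = ∑ k ∈ I.filter p, ρ (min (f k) τ) :=
        sum_congr rfl fun k hk => by
          obtain ⟨hkI, hpk⟩ := mem_filter.1 hk
          rw [min_eq_right (hp k hkI hpk)]
    _ ≤ ∑ k ∈ I, ρ (min (f k) τ) :=
        sum_le_sum_of_subset_of_nonneg (filter_subset p I) fun k hk _ =>
          nonneg_of_monotoneOn_Ici hρ0 hmono (le_min (hf k hk) hτ)

end TruncatedSum

lemma sq_abs_add_abs_le_two_mul_sum_sq {ι : Type*} [Fintype ι] (d : ι → ℝ) {a b : ι}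
    (hab : a ≠ b) : (|d a| + |d b|) ^ 2 ≤ 2 * ∑ j, d j ^ 2 := by
  calc (|d a| + |d b|) ^ 2 ≤ 2 * (d a ^ 2 + d b ^ 2) := by
        simpa only [sq_abs] using add_sq_le (a := |d a|) (b := |d b|)
    _ = 2 * ∑ j ∈ {a, b}, d j ^ 2 := by rw [sum_pair hab]
    _ ≤ 2 * ∑ j, d j ^ 2 :=
        mul_le_mul_of_nonneg_left (sum_le_univ_sum_of_nonneg fun j => sq_nonneg (d j)) zero_le_two

lemma lt_abs_sub_of_two_mul_sum_sq_lt {ι : Type*} [Fintype ι] {g u : ι → ℝ} {a b : ι}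
    {τ ζ : ℝ} (hτζ : τ < ζ) (hab : a ≠ b) (hjump : ζ ≤ |g a - g b|)
    (hclose : 2 * ∑ j, (u j - g j) ^ 2 < (ζ - τ) ^ 2) : τ < |u a - u b| := by
  have hsmall : |u a - g a| + |u b - g b| < ζ - τ := by
    refine lt_of_pow_lt_pow_left₀ 2 (sub_pos.2 hτζ).le ?_
    exact (sq_abs_add_abs_le_two_mul_sum_sq (fun j => u j - g j) hab).trans_lt hclose
  have htri : |g a - g b| ≤ |u a - u b| + (|u a - g a| + |u b - g b|) := by
    calc |g a - g b| = |(u a - u b) + (-(u a - g a) + (u b - g b))| := by ring_nf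
      _ ≤ |u a - u b| + (|u a - g a| + |u b - g b|) := by
        grw [abs_add_le, abs_add_le, abs_neg]
  linarith

theorem sum_truncated_lt_sum_truncated_add_fidelity {ι κ F : Type*} [Fintype ι]
    [SeminormedAddCommGroup F] [Module ℝ F] {ρ : ℝ → ℝ} {τ ζ α μ : ℝ} (hτ : 0 ≤ τ)
    (hρ0 : ρ 0 = 0) (hmono : MonotoneOn ρ (Set.Ici 0)) (hα : 0 < α) (hμ : 0 < μ)
    (A : (ι → ℝ) →ₗ[ℝ] F) (hμmin : ∀ v : ι → ℝ, μ * ∑ i, v i ^ 2 ≤ ‖A v‖ ^ 2)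
    (I : Finset κ) (a b : κ → ι) (g : ι → ℝ)
    (hjump : ∀ k ∈ I, g (a k) ≠ g (b k) → ζ ≤ |g (a k) - g (b k)|)
    (hζ : τ + √(4 * ρ τ * #(I.filter fun k => g (a k) ≠ g (b k)) / (α * μ)) < ζ)
    {u : ι → ℝ} (hu : u ≠ g) :
    ∑ k ∈ I, ρ (min |g (a k) - g (b k)| τ) <
      ∑ k ∈ I, ρ (min |u (a k) - u (b k)| τ) + α / 2 * ‖A (u - g)‖ ^ 2 := by
  set J := I.filter fun k => g (a k) ≠ g (b k)
  set S := ∑ j, (u j - g j) ^ 2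
  set D := ‖A (u - g)‖ ^ 2
  have hτζ : τ < ζ := (le_add_of_nonneg_right (Real.sqrt_nonneg _)).trans_lt hζ
  have hμS : μ * S ≤ D := hμmin (u - g)
  have hS : 0 < S := by
    obtain ⟨j, hj⟩ := Function.ne_iff.mp hu
    exact (sq_pos_of_ne_zero (sub_ne_zero.2 hj)).trans_le
      (single_le_sum (fun i _ => sq_nonneg (u i - g i)) (mem_univ j))
  have hD : 0 < D := (mul_pos hμ hS).trans_le hμS
  rw [sum_min_eq_card_filter_mul hρ0 hτ (fun k hk hjk => hτζ.le.trans (hjump k hk hjk))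
    fun k _ hjk => by rw [not_ne_iff.1 hjk, sub_self, abs_zero]]
  by_cases hsmall : α / 2 * D ≤ #J * ρ τ
  · have hclose : 2 * S < (ζ - τ) ^ 2 := by
      have hsq := (Real.sqrt_lt' (sub_pos.2 hτζ)).1 (lt_sub_iff_add_lt'.2 hζ)
      refine lt_of_le_of_lt ?_ hsq
      rw [le_div_iff₀ (mul_pos hα hμ)]
      linarith [mul_le_mul_of_nonneg_left hμS hα.le]
    have hsum : #J * ρ τ ≤ ∑ k ∈ I, ρ (min |u (a k) - u (b k)| τ) :=
      card_filter_mul_le_sum_min hρ0 hmono hτ (fun k _ => abs_nonneg _) fun k hk hjk =>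
        (lt_abs_sub_of_two_mul_sum_sq_lt hτζ (ne_of_apply_ne g hjk) (hjump k hk hjk) hclose).le
    linarith [mul_pos (half_pos hα) hD]
  · have hsum : 0 ≤ ∑ k ∈ I, ρ (min |u (a k) - u (b k)| τ) := sum_nonneg fun k _ =>
      nonneg_of_monotoneOn_Ici hρ0 hmono (le_min (abs_nonneg _) hτ)
    linarith

theorem truncated_regularization_perfect_recovery_general (N K : ℕ) [NeZero N]
    (ρ : ℝ → ℝ) (τ : ℝ) (hτ : 0 < τ)
    (hρ0 : ρ 0 = 0)
    (hmono : MonotoneOn ρ (Set.Ici 0))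
    (Ω : Finset (Fin N))
    (ζ α μ : ℝ) (hα : 0 < α) (hμ : 0 < μ)
    (A : (Fin N → ℝ) →ₗ[ℝ] EuclideanSpace ℝ (Fin K))
    (hμmin : ∀ u : Fin N → ℝ, μ * ∑ i, (u i) ^ 2 ≤ ‖A u‖ ^ 2)
    (g : Fin N → ℝ) (hg : g = fun i => if i ∈ Ω then ζ else 0)
    (J1 : Finset ℕ)
    (hJ1 : J1 = (Finset.range (N - 1)).filter
      (fun i => g ((i + 1 : ℕ) : Fin N) ≠ g ((i : ℕ) : Fin N)))
    (hζ : ζ > τ + Real.sqrt (4 * ρ τ * J1.card / (α * μ)))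
    (E : (Fin N → ℝ) → ℝ)
    (hE : ∀ u, E u =
      (∑ i ∈ Finset.range (N - 1),
        ρ (min |u ((i + 1 : ℕ) : Fin N) - u ((i : ℕ) : Fin N)| τ))
        + α / 2 * ‖A (u - g)‖ ^ 2) :
    ∀ u : Fin N → ℝ, u ≠ g → E g < E u := by
  intro u hu
  have hjump : ∀ x y : Fin N, g x ≠ g y → ζ ≤ |g x - g y| := by
    intro x y hxy
    simp only [hg] at hxy ⊢
    split_ifs at hxy ⊢ <;> simp_all [le_abs_self]
  subst hJ1
  rw [hE, hE, sub_self, map_zero, norm_zero, zero_pow two_ne_zero, mul_zero, add_zero]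
  exact sum_truncated_lt_sum_truncated_add_fidelity hτ.le hρ0 hmono hα hμ A hμmin _ _ _ g
    (fun k _ => hjump _ _) hζ hu

theorem truncated_regularization_perfect_recovery (N K : ℕ) [NeZero N]
    (ρ : ℝ → ℝ) (τ : ℝ) (hτ : 0 < τ)
    (hρ0 : ρ 0 = 0)
    (hmono : MonotoneOn ρ (Set.Ici 0))
    (hpos : ∀ s > (0 : ℝ), 0 < ρ s)
    (Ω : Finset (Fin N)) (hΩ1 : Ω.Nonempty) (hΩ2 : Ω ≠ Finset.univ)
    (ζ α μ : ℝ) (hζ0 : 0 < ζ) (hα : 0 < α) (hμ : 0 < μ)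
    (A : (Fin N → ℝ) →ₗ[ℝ] EuclideanSpace ℝ (Fin K))
    (hμmin : ∀ u : Fin N → ℝ, μ * ∑ i, (u i) ^ 2 ≤ ‖A u‖ ^ 2)
    (g : Fin N → ℝ) (hg : g = fun i => if i ∈ Ω then ζ else 0)
    (J1 : Finset ℕ)
    (hJ1 : J1 = (Finset.range (N - 1)).filter
      (fun i => g ((i + 1 : ℕ) : Fin N) ≠ g ((i : ℕ) : Fin N)))
    (hζ : ζ > τ + Real.sqrt (4 * ρ τ * J1.card / (α * μ)))
    (E : (Fin N → ℝ) → ℝ)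
    (hE : ∀ u, E u =
      (∑ i ∈ Finset.range (N - 1),
        ρ (min |u ((i + 1 : ℕ) : Fin N) - u ((i : ℕ) : Fin N)| τ))
        + α / 2 * ‖A (u - g)‖ ^ 2) :
    ∀ u : Fin N → ℝ, u ≠ g → E g < E u :=
  truncated_regularization_perfect_recovery_general N K ρ τ hτ hρ0 hmono Ω ζ α μ hα hμ A hμmin g hg
    J1 hJ1 hζ E hE
end

section
/- Under the assumptions of the truncated-regularization 1D model with A^T A = diag(d₁,…,d_N), dᵢ > 0, data ζ1_Ω with ζ > 0, and a subadditive nondecreasing regularizer T with T(0)=0 and T(s)>0 for s>0: any global minimizer v of E^ζ(u) = Σᵢ T(|(∇ₓu)ᵢ|) + (α/2)‖A(u − ζ1_Ω)‖² satisfies the extremum principle 0 ≤ vᵢ ≤ ζ for all i. -/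
/-! Clamping `v` componentwise to `[0, ζ]` is a contraction fixing every value of the data `g`, so it
does not increase any difference `|vᵢ₊₁ - vᵢ|`, hence (by monotonicity of `T`) not the regularizer,
and it brings every `vᵢ` weakly closer to `gᵢ ∈ {0, ζ}`, strictly so where `vᵢ ∉ [0, ζ]`. A minimizer
with a component outside `[0, ζ]` would therefore have a competitor of strictly smaller energy. -/

open Finset Set

section projIcc

variable {α : Type*} [AddCommGroup α] [LinearOrder α] [IsOrderedAddMonoid α] {a b c x : α}

lemma abs_projIcc_sub_le (h : a ≤ b) (hc : c ∈ Icc a b) : |(projIcc a b h x : α) - c| ≤ |x - c| := by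
  simpa [projIcc_of_mem h hc] using abs_projIcc_sub_projIcc h (c := x) (d := c)

lemma abs_projIcc_sub_lt (h : a ≤ b) (hc : c ∈ Icc a b) (hx : x ∉ Icc a b) :
    |(projIcc a b h x : α) - c| < |x - c| := by
  obtain ⟨hac, hcb⟩ := hc
  rw [Set.mem_Icc, not_and_or, not_le, not_le] at hx
  rcases hx with hxa | hbx
  · rw [projIcc_of_le_left h hxa.le, abs_of_nonpos (sub_nonpos.mpr hac),
      abs_of_neg (sub_neg.mpr (hxa.trans_le hac))]
    simpa using hxa
  · rw [projIcc_of_right_le h hbx.le, abs_of_nonneg (sub_nonneg.mpr hcb),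
      abs_of_pos (sub_pos.mpr (hcb.trans_lt hbx))]
    simpa using hbx

end projIcc

lemma sum_mul_sq_lt_sum_mul_sq {ι : Type*} [Fintype ι] {d x y : ι → ℝ} (hd : ∀ i, 0 < d i)
    (hle : ∀ i, |x i| ≤ |y i|) (hlt : ∃ i, |x i| < |y i|) :
    ∑ i, d i * x i ^ 2 < ∑ i, d i * y i ^ 2 := by
  obtain ⟨i, hi⟩ := hlt
  exact sum_lt_sum (fun j _ => mul_le_mul_of_nonneg_left (sq_le_sq.mpr (hle j)) (hd j).le)
    ⟨i, mem_univ i, mul_lt_mul_of_pos_left (sq_lt_sq.mpr hi) (hd i)⟩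

theorem truncated_regularization_extremum_principle_general (N : ℕ) [NeZero N]
    (T : ℝ → ℝ)
    (hmono : MonotoneOn T (Set.Ici 0))
    (Ω : Finset (Fin N))
    (ζ α : ℝ) (hζ : 0 < ζ) (hα : 0 < α)
    (d : Fin N → ℝ) (hd : ∀ i, 0 < d i)
    (g : Fin N → ℝ) (hg : g = fun i => if i ∈ Ω then ζ else 0)
    (E : (Fin N → ℝ) → ℝ)
    (hE : ∀ u, E u =
      (∑ i ∈ Finset.range (N - 1), T |u (Fin.ofNat N (i + 1 : ℕ)) - u (Fin.ofNat N (i : ℕ))|)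
        + α / 2 * ∑ i, d i * (u i - g i) ^ 2)
    (v : Fin N → ℝ) (hv : ∀ u, E v ≤ E u) :
    ∀ i, 0 ≤ v i ∧ v i ≤ ζ := by
  intro i
  by_contra hvi
  have hg_mem : ∀ j, g j ∈ Icc 0 ζ := fun j => by
    subst hg; dsimp only; split_ifs <;> simp [hζ.le]
  set w : Fin N → ℝ := fun j => projIcc 0 ζ hζ.le (v j)
  have hreg : ∑ k ∈ range (N - 1), T |w (Fin.ofNat N (k + 1)) - w (Fin.ofNat N k)|
      ≤ ∑ k ∈ range (N - 1), T |v (Fin.ofNat N (k + 1)) - v (Fin.ofNat N k)| :=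
    sum_le_sum fun k _ => hmono (mem_Ici.mpr (abs_nonneg _)) (mem_Ici.mpr (abs_nonneg _)) (abs_projIcc_sub_projIcc _)
  have hfid : ∑ j, d j * (w j - g j) ^ 2 < ∑ j, d j * (v j - g j) ^ 2 :=
    sum_mul_sq_lt_sum_mul_sq hd (fun j => abs_projIcc_sub_le hζ.le (hg_mem j))
      ⟨i, abs_projIcc_sub_lt hζ.le (hg_mem i) hvi⟩
  have hlt : E w < E v := by
    rw [hE, hE]
    exact add_lt_add_of_le_of_lt hreg (mul_lt_mul_of_pos_left hfid (by positivity))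
  exact (hv w).not_gt hlt

theorem truncated_regularization_extremum_principle (N : ℕ) [NeZero N]
    (T : ℝ → ℝ)
    (hT0 : T 0 = 0)
    (hmono : MonotoneOn T (Set.Ici 0))
    (hpos : ∀ s > (0 : ℝ), 0 < T s)
    (hsub : ∀ a b : ℝ, 0 ≤ a → 0 ≤ b → T (a + b) ≤ T a + T b)
    (Ω : Finset (Fin N)) (hΩ1 : Ω.Nonempty) (hΩ2 : Ω ≠ Finset.univ)
    (ζ α : ℝ) (hζ : 0 < ζ) (hα : 0 < α)
    (d : Fin N → ℝ) (hd : ∀ i, 0 < d i)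
    (g : Fin N → ℝ) (hg : g = fun i => if i ∈ Ω then ζ else 0)
    (E : (Fin N → ℝ) → ℝ)
    (hE : ∀ u, E u =
      (∑ i ∈ Finset.range (N - 1), T |u (Fin.ofNat N (i + 1 : ℕ)) - u (Fin.ofNat N (i : ℕ))|)
        + α / 2 * ∑ i, d i * (u i - g i) ^ 2)
    (v : Fin N → ℝ) (hv : ∀ u, E v ≤ E u) :
    ∀ i, 0 ≤ v i ∧ v i ≤ ζ :=
  truncated_regularization_extremum_principle_general N T hmono Ω ζ α hζ hα d hd g hg E hE v hv
end

section
/- Under the setting of the diagonal 1D truncated model (A^T A diagonal with positive entries, T subadditive, nondecreasing, T(0)=0, T(s)>0 for s>0), any global minimizer v of E^ζ introduces no new discontinuities: {i : v_{i+1} ≠ vᵢ} ⊆ {i : (ζ1_Ω)_{i+1} ≠ (ζ1_Ω)ᵢ}. -/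
/-!
Suppose a minimizer `v` jumps between `i` and `i + 1` while the datum `g` does not, say
`g i = g (i + 1) = c`. Copy across the jump whichever of `v i`, `v (i + 1)` is closer to `c`:
since `T ∘ |· - ·|` satisfies the triangle inequality the regularizer does not increase, while
the fidelity term strictly decreases. Ties cannot occur: clamping to `[0, ζ]` never increases
either term, so `v` takes values in `[0, ζ]`, and `c ∈ {0, ζ}` is an endpoint of that interval.
-/

open Fin.NatCast

open Finset Function

section ChainCost

variable {α : Type*} (c : α → α → ℝ)

def chainCost (m : ℕ) (x : ℕ → α) : ℝ := ∑ i ∈ range m, c (x (i + 1)) (x i)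

variable {c}

lemma chainCost_congr {m : ℕ} {x y : ℕ → α} (h : ∀ i ≤ m, x i = y i) :
    chainCost c m x = chainCost c m y :=
  sum_congr rfl fun i hi => by
    have hi : i < m := mem_range.1 hi
    rw [h i hi.le, h (i + 1) hi]

lemma sum_range_le_sum_range_of_pair {f g : ℕ → ℝ} {m j : ℕ}
    (h_off : ∀ i, i ≠ j → i ≠ j + 1 → g i = f i)
    (h_pair : g j + g (j + 1) ≤ f j + f (j + 1)) (h_fst : j + 1 < m ∨ g j ≤ f j) :
    ∑ i ∈ range m, g i ≤ ∑ i ∈ range m, f i := by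
  rcases lt_or_ge (j + 1) m with hm | hm
  · have hj1 : j + 1 ∈ range m := mem_range.2 hm
    have hj : j ∈ (range m).erase (j + 1) := by simp only [mem_erase, mem_range]; omega
    rw [← add_sum_erase _ _ hj1, ← add_sum_erase _ _ hj1, ← add_sum_erase _ _ hj,
      ← add_sum_erase _ _ hj, sum_congr rfl fun i hi => h_off i (ne_of_mem_erase hi)
        (ne_of_mem_erase (mem_of_mem_erase hi))]
    linarith
  · refine sum_le_sum fun i hi => ?_
    rcases eq_or_ne i j with rfl | hij
    · exact h_fst.resolve_left hm.not_gt
    · exact (h_off i hij (by have := mem_range.1 hi; omega)).le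

lemma chainCost_update_succ_le (hc_self : ∀ a, c a a = 0)
    (hc_nonneg : ∀ a b, 0 ≤ c a b) (hc_tri : ∀ a b e, c a e ≤ c a b + c b e)
    (x : ℕ → α) (k m : ℕ) :
    chainCost c m (update x (k + 1) (x k)) ≤ chainCost c m x := by
  refine sum_range_le_sum_range_of_pair (j := k) (fun i hik hik1 => ?_) ?_ ?_
  · simp [hik, hik1]
  · simpa [hc_self, add_comm] using hc_tri (x (k + 1 + 1)) (x (k + 1)) (x k)
  · simp [hc_self, hc_nonneg]

lemma chainCost_update_of_succ_le (hc_self : ∀ a, c a a = 0)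
    (hc_nonneg : ∀ a b, 0 ≤ c a b) (hc_tri : ∀ a b e, c a e ≤ c a b + c b e)
    (x : ℕ → α) {k m : ℕ} (hk : k < m) :
    chainCost c m (update x k (x (k + 1))) ≤ chainCost c m x := by
  rcases k with _ | k
  · refine sum_range_le_sum_range_of_pair (j := 0) (fun i hi0 hi1 => ?_) ?_ ?_
    · simp [hi0]
    · simp [hc_self, hc_nonneg]
    · simp [hc_self, hc_nonneg]
  · refine sum_range_le_sum_range_of_pair (j := k) (fun i hik hik1 => ?_) ?_ (.inl hk)
    · simp [hik, hik1]
    · simpa [hc_self, add_comm] using hc_tri (x (k + 1 + 1)) (x (k + 1)) (x k)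

end ChainCost

lemma Fin.update_natCast_apply {β : Type*} {N : ℕ} [NeZero N] (v : Fin N → β) (a : β)
    {k n : ℕ} (hk : k < N) (hn : n < N) :
    update v (k : Fin N) a (n : Fin N) = update (fun n : ℕ => v n) k a n := by
  rcases eq_or_ne n k with rfl | hnk
  · simp
  · have : (n : Fin N) ≠ k := fun h => hnk <| by
      simpa [Fin.val_cast_of_lt hk, Fin.val_cast_of_lt hn] using congrArg Fin.val h
    simp [update_of_ne this, update_of_ne hnk]

lemma chainCost_update_natCast {α : Type*} {c : α → α → ℝ} {N : ℕ} [NeZero N]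
    (v : Fin N → α) (a : α) {k : ℕ} (hk : k < N) :
    chainCost c (N - 1) (fun n : ℕ => update v (k : Fin N) a n) =
      chainCost c (N - 1) (update (fun n : ℕ => v n) k a) :=
  chainCost_congr fun _ hi => Fin.update_natCast_apply v a hk (by omega)

lemma triangle_comp_abs_sub {T : ℝ → ℝ} (hmono : MonotoneOn T (Set.Ici 0))
    (hsub : ∀ a b : ℝ, 0 ≤ a → 0 ≤ b → T (a + b) ≤ T a + T b) (x y z : ℝ) :
    T |x - z| ≤ T |x - y| + T |y - z| :=
  (hmono (Set.mem_Ici.2 (abs_nonneg _)) (Set.mem_Ici.2 (by positivity)) (abs_sub_le x y z)).trans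
    (hsub _ _ (abs_nonneg _) (abs_nonneg _))

lemma chainCost_comp_le {T : ℝ → ℝ} (hmono : MonotoneOn T (Set.Ici 0)) {f : ℝ → ℝ}
    (hf : ∀ a b, |f a - f b| ≤ |a - b|) (m : ℕ) (x : ℕ → ℝ) :
    chainCost (fun a b => T |a - b|) m (f ∘ x) ≤ chainCost (fun a b => T |a - b|) m x :=
  sum_le_sum fun _ _ => hmono (Set.mem_Ici.2 (abs_nonneg _)) (Set.mem_Ici.2 (abs_nonneg _)) (hf _ _)

lemma abs_projIcc_sub_le_s12 {a b : ℝ} (h : a ≤ b) {y : ℝ} (hy : y ∈ Set.Icc a b) (x : ℝ) :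
    |(Set.projIcc a b h x : ℝ) - y| ≤ |x - y| := by
  simpa [Set.projIcc_of_mem h hy] using Set.abs_projIcc_sub_projIcc h (c := x) (d := y)

lemma abs_projIcc_sub_lt_s12 {a b : ℝ} (h : a ≤ b) {x y : ℝ} (hy : y ∈ Set.Icc a b)
    (hx : x ∉ Set.Icc a b) : |(Set.projIcc a b h x : ℝ) - y| < |x - y| := by
  rw [Set.mem_Icc, not_and_or, not_le, not_le] at hx
  rcases hx with hxa | hxb
  · rw [Set.projIcc_of_le_left h hxa.le, abs_of_nonpos (sub_nonpos.2 hy.1),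
      abs_of_neg (by linarith [hy.1])]
    linarith
  · rw [Set.projIcc_of_right_le h hxb.le, abs_of_nonneg (sub_nonneg.2 hy.2),
      abs_of_pos (by linarith [hy.2])]
    linarith

lemma injOn_abs_sub_of_endpoint {a b c : ℝ} (hc : c = a ∨ c = b) :
    Set.InjOn (fun x => |x - c|) (Set.Icc a b) := by
  rcases hc with rfl | rfl <;> intro x hx y hy hxy <;> simp only at hxy
  · rwa [abs_of_nonneg (sub_nonneg.2 hx.1), abs_of_nonneg (sub_nonneg.2 hy.1), sub_left_inj] at hxy
  · rw [abs_of_nonpos (sub_nonpos.2 hx.2), abs_of_nonpos (sub_nonpos.2 hy.2)] at hxy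
    linarith

section WeightedSumSq

variable {ι : Type*} [Fintype ι] {d u v g : ι → ℝ}

lemma weighted_sum_sq_lt (hd : ∀ i, 0 < d i) (hle : ∀ i, |u i - g i| ≤ |v i - g i|)
    (hlt : ∃ i, |u i - g i| < |v i - g i|) :
    ∑ i, d i * (u i - g i) ^ 2 < ∑ i, d i * (v i - g i) ^ 2 := by
  obtain ⟨k, hk⟩ := hlt
  exact sum_lt_sum (fun i _ => mul_le_mul_of_nonneg_left (sq_le_sq.2 (hle i)) (hd i).le)
    ⟨k, mem_univ k, mul_lt_mul_of_pos_left (sq_lt_sq.2 hk) (hd k)⟩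

lemma weighted_sum_sq_update_lt [DecidableEq ι] (hd : ∀ i, 0 < d i) {k : ι} {a : ℝ}
    (h : |a - g k| < |v k - g k|) :
    ∑ i, d i * (update v k a i - g i) ^ 2 < ∑ i, d i * (v i - g i) ^ 2 := by
  refine weighted_sum_sq_lt hd (fun i => ?_) ⟨k, by simpa using h⟩
  rcases eq_or_ne i k with rfl | hik
  · simpa using h.le
  · simp [update_of_ne hik]

end WeightedSumSq

theorem truncated_regularization_no_new_discontinuity_general (N : ℕ) [NeZero N]
    (T : ℝ → ℝ)
    (hT0 : T 0 = 0)
    (hmono : MonotoneOn T (Set.Ici 0))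
    (hsub : ∀ a b : ℝ, 0 ≤ a → 0 ≤ b → T (a + b) ≤ T a + T b)
    (Ω : Finset (Fin N))
    (ζ α : ℝ) (hζ : 0 < ζ) (hα : 0 < α)
    (d : Fin N → ℝ) (hd : ∀ i, 0 < d i)
    (g : Fin N → ℝ) (hg : g = fun i => if i ∈ Ω then ζ else 0)
    (E : (Fin N → ℝ) → ℝ)
    (hE : ∀ u, E u =
      (∑ i ∈ Finset.range (N - 1), T |u ((i + 1 : ℕ) : Fin N) - u ((i : ℕ) : Fin N)|)
        + α / 2 * ∑ i, d i * (u i - g i) ^ 2)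
    (v : Fin N → ℝ) (hv : ∀ u, E v ≤ E u) :
    ∀ i ∈ Finset.range (N - 1),
      v ((i + 1 : ℕ) : Fin N) ≠ v ((i : ℕ) : Fin N) →
      g ((i + 1 : ℕ) : Fin N) ≠ g ((i : ℕ) : Fin N) := by
  set R : (Fin N → ℝ) → ℝ := fun u =>
    chainCost (fun a b => T |a - b|) (N - 1) (fun n : ℕ => u n)
  have hc_self (a : ℝ) : T |a - a| = 0 := by simp [hT0]
  have hc_nonneg (a b : ℝ) : 0 ≤ T |a - b| :=
    hT0 ▸ hmono Set.self_mem_Ici (Set.mem_Ici.2 (abs_nonneg _)) (abs_nonneg _)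
  have hc_tri := triangle_comp_abs_sub hmono hsub
  have hg_end (p : Fin N) : g p = 0 ∨ g p = ζ := by simp only [hg]; split_ifs <;> simp
  have hg_mem (p : Fin N) : g p ∈ Set.Icc 0 ζ := by
    rcases hg_end p with h | h <;> simp [h, hζ.le]
  have no_better (u : Fin N → ℝ) (hR : R u ≤ R v)
      (hF : ∑ p, d p * (u p - g p) ^ 2 < ∑ p, d p * (v p - g p) ^ 2) : False := by
    have := hv u
    rw [hE, hE] at this
    change R v + _ ≤ R u + _ at this
    nlinarith
  have hv_mem (p : Fin N) : v p ∈ Set.Icc 0 ζ := by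
    by_contra hp
    exact no_better (fun q => Set.projIcc 0 ζ hζ.le (v q))
      (chainCost_comp_le hmono (fun _ _ => Set.abs_projIcc_sub_projIcc hζ.le) _ _)
      (weighted_sum_sq_lt hd (fun q => abs_projIcc_sub_le_s12 hζ.le (hg_mem q) _)
        ⟨p, abs_projIcc_sub_lt_s12 hζ.le (hg_mem p) hp⟩)
  intro i hi_mem hv_ne hg_eq
  have hi : i < N - 1 := Finset.mem_range.1 hi_mem
  have hdist : |v (i : Fin N) - g i| ≠ |v ((i + 1 : ℕ) : Fin N) - g i| :=
    (injOn_abs_sub_of_endpoint (hg_end _)).ne (hv_mem _) (hv_mem _) hv_ne.symm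
  rcases hdist.lt_or_gt with h | h
  · refine no_better (update v ((i + 1 : ℕ) : Fin N) (v i)) ?_
      (weighted_sum_sq_update_lt hd (by rwa [hg_eq]))
    simpa only [R, chainCost_update_natCast v _ (by omega : i + 1 < N)] using
      chainCost_update_succ_le hc_self hc_nonneg hc_tri (fun n : ℕ => v n) i (N - 1)
  · refine no_better (update v (i : Fin N) (v ((i + 1 : ℕ) : Fin N))) ?_
      (weighted_sum_sq_update_lt hd h)
    simpa only [R, chainCost_update_natCast v _ (by omega : i < N)] using
      chainCost_update_of_succ_le hc_self hc_nonneg hc_tri (fun n : ℕ => v n) hi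

theorem truncated_regularization_no_new_discontinuity (N : ℕ) [NeZero N]
    (T : ℝ → ℝ)
    (hT0 : T 0 = 0)
    (hmono : MonotoneOn T (Set.Ici 0))
    (hpos : ∀ s > (0 : ℝ), 0 < T s)
    (hsub : ∀ a b : ℝ, 0 ≤ a → 0 ≤ b → T (a + b) ≤ T a + T b)
    (Ω : Finset (Fin N)) (hΩ1 : Ω.Nonempty) (hΩ2 : Ω ≠ Finset.univ)
    (ζ α : ℝ) (hζ : 0 < ζ) (hα : 0 < α)
    (d : Fin N → ℝ) (hd : ∀ i, 0 < d i)
    (g : Fin N → ℝ) (hg : g = fun i => if i ∈ Ω then ζ else 0)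
    (E : (Fin N → ℝ) → ℝ)
    (hE : ∀ u, E u =
      (∑ i ∈ Finset.range (N - 1), T |u ((i + 1 : ℕ) : Fin N) - u ((i : ℕ) : Fin N)|)
        + α / 2 * ∑ i, d i * (u i - g i) ^ 2)
    (v : Fin N → ℝ) (hv : ∀ u, E v ≤ E u) :
    ∀ i ∈ Finset.range (N - 1),
      v ((i + 1 : ℕ) : Fin N) ≠ v ((i : ℕ) : Fin N) →
      g ((i + 1 : ℕ) : Fin N) ≠ g ((i : ℕ) : Fin N) :=
  truncated_regularization_no_new_discontinuity_general N T hT0 hmono hsub Ω ζ α hζ hα d hd g hg E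
    hE v hv
end
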